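/- Let X and Y be open subsets of ℝ^p and ℝ^q respectively (p, q ∈ ℕ). Suppose Z is a dense subset of βY that is homeomorphic to X. Then Z ⊆ ι_Y(Y). -/

import Mathlib

/-!
A dense locally compact subspace `Z` of the Hausdorff space `βY` is open in `βY`, so every
`z ∈ Z` has a countable neighbourhood basis in `βY`. Such a point is the limit of a sequence
`yₙ` of `Y`. If `z ∉ Y`, the sequence has no cluster point in `Y`, so any subset of its range is
closed in `Y`; splitting the infinite range into two disjoint infinite pieces gives disjoint
closed sets of `Y` whose closures in `βY` both contain `z`. In a normal space `Y` this is
impossible: a Urysohn function separating the two sets extends to `βY`.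
-/

open Set Filter Topology

theorem Dense.isOpen_of_locallyCompactSpace {X : Type*} [TopologicalSpace X] [T2Space X]
    {s : Set X} (hs : Dense s) [LocallyCompactSpace s] : IsOpen s := by
  refine isOpen_iff_mem_nhds.2 fun x hx => ?_
  obtain ⟨K, hK, hKx⟩ := exists_compact_mem_nhds (⟨x, hx⟩ : s)
  obtain ⟨V, hV, hxV, hVK⟩ :=
    mem_nhdsWithin.1 (map_nhds_subtype_val (⟨x, hx⟩ : s) ▸ image_mem_map hKx)
  have : V ⊆ (↑) '' K := calc
    V ⊆ closure (V ∩ s) := hs.open_subset_closure_inter hV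
    _ ⊆ (↑) '' K := closure_minimal hVK (hK.image continuous_subtype_val).isClosed
  exact mem_of_superset (hV.mem_nhds hxV) (this.trans (Subtype.coe_image_subset s K))

theorem disjoint_closure_image_stoneCechUnit {Y : Type*} [TopologicalSpace Y] [NormalSpace Y]
    {A B : Set Y} (hA : IsClosed A) (hB : IsClosed B) (hAB : Disjoint A B) :
    Disjoint (closure (stoneCechUnit '' A)) (closure (stoneCechUnit '' B)) := by
  obtain ⟨f, hfA, hfB, hf⟩ := exists_continuous_zero_one_of_isClosed hA hB hAB
  let g : Y → unitInterval := fun y => ⟨f y, hf y⟩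
  have hg : Continuous g := f.continuous.subtype_mk _
  have hG : ∀ (C : Set Y) (c : unitInterval), (∀ y ∈ C, g y = c) →
      closure (stoneCechUnit '' C) ⊆ stoneCechExtend hg ⁻¹' {c} := fun C c hC =>
    closure_minimal
      (fun _ ⟨y, hy, hyC⟩ => hyC ▸ (stoneCechExtend_stoneCechUnit hg y).trans (hC y hy))
      (isClosed_singleton.preimage (continuous_stoneCechExtend hg))
  exact ((disjoint_singleton.2 zero_ne_one).preimage _).mono
    (hG A 0 fun y hy => Subtype.ext (hfA hy)) (hG B 1 fun y hy => Subtype.ext (hfB hy))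

theorem locallyFinite_singleton_of_forall_not_mapClusterPt {ι X : Type*} [TopologicalSpace X]
    {u : ι → X} (hu : ∀ x, ¬ MapClusterPt x cofinite u) :
    LocallyFinite fun i => ({u i} : Set X) := by
  intro x
  obtain ⟨U, hU, hUu⟩ := not_forall₂.1 (mt mapClusterPt_iff_frequently.2 (hu x))
  exact ⟨U, hU, by simpa [not_frequently, singleton_inter_nonempty] using hUu⟩

theorem LocallyFinite.isClosed_image {ι X : Type*} [TopologicalSpace X] [T1Space X] {u : ι → X}
    (hu : LocallyFinite fun i => ({u i} : Set X)) (s : Set ι) : IsClosed (u '' s) := by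
  rw [image_eq_iUnion, biUnion_eq_iUnion]
  exact (hu.comp_injective Subtype.val_injective).isClosed_iUnion fun _ => isClosed_singleton

theorem Set.Infinite.exists_disjoint_infinite_subsets {α : Type*} {s : Set α} (hs : s.Infinite) :
    ∃ a ⊆ s, ∃ b ⊆ s, Disjoint a b ∧ a.Infinite ∧ b.Infinite := by
  let f : ℕ → α := fun n => hs.natEmbedding s n
  have hf : Function.Injective f := Subtype.val_injective.comp (hs.natEmbedding s).injective
  have hfs : range f ⊆ s := by rintro _ ⟨n, rfl⟩; exact (hs.natEmbedding s n).2
  refine ⟨range fun n => f (2 * n), (range_comp_subset_range _ f).trans hfs,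
    range fun n => f (2 * n + 1), (range_comp_subset_range _ f).trans hfs, ?_,
    infinite_range_of_injective (hf.comp fun m n h => by simpa using h),
    infinite_range_of_injective (hf.comp fun m n h => by simpa using h)⟩
  rw [disjoint_iff_forall_ne]
  rintro _ ⟨m, rfl⟩ _ ⟨n, rfl⟩ h
  have := hf h
  omega

theorem mem_range_stoneCechUnit_of_isCountablyGenerated {Y : Type*} [TopologicalSpace Y]
    [NormalSpace Y] [T1Space Y] (z : StoneCech Y) [(𝓝 z).IsCountablyGenerated] :
    z ∈ range (stoneCechUnit : Y → StoneCech Y) := by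
  by_contra hz
  have := comap_neBot_iff_frequently.2 (mem_closure_iff_frequently.1 (denseRange_stoneCechUnit z))
  obtain ⟨u, hu⟩ := exists_seq_tendsto (comap (stoneCechUnit : Y → StoneCech Y) (𝓝 z))
  rw [tendsto_comap_iff, ← Nat.cofinite_eq_atTop] at hu
  -- a cluster point `y` of `u` would give `stoneCechUnit y = z`
  have hclus : ∀ y, ¬ MapClusterPt y cofinite u := fun y hy => hz ⟨y, eq_of_nhds_neBot <|
    (hy.continuousAt_comp continuous_stoneCechUnit.continuousAt).clusterPt.mono hu⟩
  have hu_lf := locallyFinite_singleton_of_forall_not_mapClusterPt hclus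
  have hrange : (range u).Infinite := fun h => infinite_univ <| by
    simpa using h.preimage' (f := u) fun y _ =>
      (hu_lf.point_finite y).subset fun _ => Eq.symm
  have hclosure : ∀ C ⊆ range u, C.Infinite →
      IsClosed C ∧ z ∈ closure (stoneCechUnit '' C) := by
    intro C hCu hC
    rw [← image_preimage_eq_of_subset hCu] at hC ⊢
    refine ⟨hu_lf.isClosed_image _, mem_closure_of_frequently_of_tendsto ?_ hu⟩
    exact (frequently_cofinite_iff_infinite.2 (hC.of_image u)).mono fun n hn =>
      ⟨u n, mem_image_of_mem u hn, rfl⟩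
  obtain ⟨A, hAu, B, hBu, hAB, hA, hB⟩ := hrange.exists_disjoint_infinite_subsets
  obtain ⟨hAc, hzA⟩ := hclosure A hAu hA
  obtain ⟨hBc, hzB⟩ := hclosure B hBu hB
  exact disjoint_left.1 (disjoint_closure_image_stoneCechUnit hAc hBc hAB) hzA hzB

theorem Dense.subset_range_stoneCechUnit {Y : Type*} [TopologicalSpace Y] [NormalSpace Y]
    [T1Space Y] {Z : Set (StoneCech Y)} (hZ : Dense Z) [LocallyCompactSpace Z]
    [FirstCountableTopology Z] : Z ⊆ range stoneCechUnit := by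
  intro z hz
  have : (𝓝 z).IsCountablyGenerated := by
    rw [← hZ.isOpen_of_locallyCompactSpace.isOpenEmbedding_subtypeVal.map_nhds_eq ⟨z, hz⟩]
    infer_instance
  exact mem_range_stoneCechUnit_of_isCountablyGenerated z

theorem dense_homeomorphic_subset_of_stoneCech_subset_range
    {p q : ℕ} (X : Set (Fin p → ℝ)) (Y : Set (Fin q → ℝ))
    (hX : IsOpen X)
    (Z : Set (StoneCech Y)) (hZ : Dense Z) (hhomeo : Nonempty (Z ≃ₜ X)) :
    Z ⊆ Set.range (stoneCechUnit : Y → StoneCech Y) := by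
  obtain ⟨e⟩ := hhomeo
  have : LocallyCompactSpace X := hX.locallyCompactSpace
  have : LocallyCompactSpace Z := e.locallyCompactSpace_iff.2 this
  have : FirstCountableTopology Z := e.isEmbedding.firstCountableTopology
  exact hZ.subset_range_stoneCechUnit
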